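/- For any Hermitian positive semidefinite matrix A ∈ ℂ^{n×n}, per(A) ≥ 0 (in particular per(A) is real). -/

import Mathlib

/-!
Write `A = Cᴴ * C`. Expanding `per (Cᴴ * C)` and regrouping by the map `f` that chooses, for each
column of `C`, a row index, gives the Cauchy–Binet-type identity
`n! · per (Cᴴ * C) = ∑ f, |per C_f|²`, where `C_f = C.submatrix f id` picks the rows
`f 1, …, f n` of `C`. The factor `n!` appears because `per C_f` does not change when `f` is
precomposed with a permutation, so each term of the expansion can be symmetrized.
-/

open scoped Matrix

noncomputable def perm {n : ℕ} (M : Matrix (Fin n) (Fin n) ℂ) : ℂ :=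
  ∑ σ : Equiv.Perm (Fin n), ∏ i, M i (σ i)

open Equiv Finset

namespace Matrix

variable {m n R : Type*} [Fintype n] [DecidableEq n]

section CommSemiring

variable [CommSemiring R]

theorem permanent_submatrix_comp_perm (C : Matrix m n R) (f : n → m) (σ : Perm n) :
    (C.submatrix (f ∘ σ) id).permanent = (C.submatrix f id).permanent :=
  permanent_permute_cols σ (C.submatrix f id)

variable [Fintype m] [StarRing R]

theorem permanent_conjTranspose_mul_self_eq_sum (C : Matrix m n R) :
    (Cᴴ * C).permanent =
      ∑ f : n → m, star (C.submatrix f id).permanent * ∏ i, C (f i) i := by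
  calc (Cᴴ * C).permanent
      = ∑ σ : Perm n, ∑ f : n → m, ∏ i, star (C (f i) (σ i)) * C (f i) i := by
        simp only [permanent, mul_apply, conjTranspose_apply, Fintype.prod_sum]
    _ = ∑ f : n → m, star (∑ σ : Perm n, ∏ i, C (f i) (σ i)) * ∏ i, C (f i) i := by
        simp only [prod_mul_distrib, ← star_prod, star_sum, sum_mul]
        exact sum_comm
    _ = ∑ f : n → m, star (C.submatrix f id).permanent * ∏ i, C (f i) i := by
        refine sum_congr rfl fun f _ => ?_
        rw [← permanent_transpose (C.submatrix f id)]
        rfl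

theorem card_perm_nsmul_permanent_conjTranspose_mul_self (C : Matrix m n R) :
    Fintype.card (Perm n) • (Cᴴ * C).permanent =
      ∑ f : n → m, star (C.submatrix f id).permanent * (C.submatrix f id).permanent := by
  calc Fintype.card (Perm n) • (Cᴴ * C).permanent
      = ∑ σ : Perm n, ∑ f : n → m,
          star (C.submatrix f id).permanent * ∏ i, C (f i) i := by
        rw [permanent_conjTranspose_mul_self_eq_sum, sum_const, card_univ]
    _ = ∑ σ : Perm n, ∑ f : n → m,
          star (C.submatrix (f ∘ σ) id).permanent * ∏ i, C (f (σ i)) i := by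
        refine sum_congr rfl fun σ _ => ?_
        exact (Fintype.sum_equiv (σ.symm.arrowCongr (.refl m)) _ _ fun f => rfl).symm
    _ = ∑ f : n → m, star (C.submatrix f id).permanent * (C.submatrix f id).permanent := by
        simp only [permanent_submatrix_comp_perm, ← mul_sum, sum_comm (γ := Perm n)]
        rfl

theorem card_perm_nsmul_permanent_conjTranspose_mul_self_nonneg [PartialOrder R]
    [StarOrderedRing R] (C : Matrix m n R) :
    0 ≤ Fintype.card (Perm n) • (Cᴴ * C).permanent := by
  rw [card_perm_nsmul_permanent_conjTranspose_mul_self]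
  exact sum_nonneg fun f _ => star_mul_self_nonneg _

end CommSemiring

open ComplexOrder in
theorem PosSemidef.permanent_nonneg {𝕜 : Type*} [RCLike 𝕜] {A : Matrix n n 𝕜}
    (hA : A.PosSemidef) :
    0 ≤ A.permanent := by
  obtain ⟨C, rfl⟩ : ∃ C, A = Cᴴ * C := by
    open scoped MatrixOrder in
    exact CStarAlgebra.nonneg_iff_eq_star_mul_self.mp hA.nonneg
  have hcard : (0 : 𝕜) < Fintype.card (Perm n) := by exact_mod_cast Fintype.card_pos
  have hscaled := card_perm_nsmul_permanent_conjTranspose_mul_self_nonneg C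
  rw [nsmul_eq_mul] at hscaled
  rw [← inv_mul_cancel_left₀ hcard.ne' (Cᴴ * C).permanent]
  exact mul_nonneg (inv_nonneg.mpr hcard.le) hscaled

end Matrix

theorem perm_eq_permanent {n : ℕ} (A : Matrix (Fin n) (Fin n) ℂ) : perm A = A.permanent :=
  A.permanent_transpose

open ComplexOrder in
theorem perm_nonneg (n : ℕ) (A : Matrix (Fin n) (Fin n) ℂ) (hA : A.PosSemidef) :
    0 ≤ perm A := by
  rw [perm_eq_permanent]
  exact hA.permanent_nonneg
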